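/- Let F be a field of characteristic 0 with a p-valuation v. Then for every x ∈ F, (x^p − x)² − 1 ≠ 0 is guaranteed where needed, the Kochen operator value γ(x) = (1/p)·(x^p − x)/((x^p − x)² − 1) is defined, and v(γ(x)) ≥ 0. -/

import Mathlib

/-!
Write `v` for the valuation of `O` and `y = x ^ p - x`; it suffices that `v y ≠ 1`. If `x ∈ O`,
then `x ≡ n` modulo the maximal ideal for an integer `n`, so `y ≡ n ^ p - n ≡ 0` by Fermat, as
`v p < 1`; if `x ∉ O`, then `v y = v x ^ p > 1`. When `v y < 1`, `y ^ 2 - 1` is a unit of `O` and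
`y / p ∈ O`; the case `v y > 1` reduces to this one because `y / (y ^ 2 - 1)` only changes sign
under `y ↦ y⁻¹`.
-/

/-- `x` lies in the maximal ideal of the valuation subring `O`. -/
def MemMaxIdeal {F : Type*} [Field F] (O : ValuationSubring F) (x : F) : Prop :=
  x ∈ O ∧ (x = 0 ∨ x⁻¹ ∉ O)

/-- `O` is the valuation ring of a `p`-valuation on `F`: `p` lies in the maximal
ideal, `v p` is the minimal positive value, and the residue field is `𝔽_p`. -/
def IsPValuationRing (p : ℕ) {F : Type*} [Field F] (O : ValuationSubring F) : Prop :=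
  MemMaxIdeal O (p : F) ∧
  (∀ x : F, MemMaxIdeal O x → x / (p : F) ∈ O) ∧
  (∀ x : F, x ∈ O → ∃ n : Fin p, MemMaxIdeal O (x - (n : ℕ)))

namespace ValuationSubring

variable {F : Type*} [Field F] {O : ValuationSubring F}

theorem memMaxIdeal_iff_valuation_lt_one {x : F} : MemMaxIdeal O x ↔ O.valuation x < 1 := by
  rcases eq_or_ne x 0 with rfl | hx
  · simp [MemMaxIdeal]
  have hvx : 0 < O.valuation x := zero_lt_iff.mpr ((Valuation.ne_zero_iff _).mpr hx)
  simp only [MemMaxIdeal, hx, false_or, ← valuation_le_one_iff, map_inv₀, not_le,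
    one_lt_inv₀ hvx, and_iff_right_iff_imp]
  exact le_of_lt

theorem valuation_pow_sub_pow_le {x y : F} (hx : x ∈ O) (hy : y ∈ O) (n : ℕ) :
    O.valuation (x ^ n - y ^ n) ≤ O.valuation (x - y) := by
  obtain ⟨c, hc⟩ := sub_dvd_pow_sub_pow (⟨x, hx⟩ : O) ⟨y, hy⟩ n
  have hc' : x ^ n - y ^ n = (x - y) * c := congrArg Subtype.val hc
  rw [hc', map_mul]
  exact mul_le_of_le_one_right' (valuation_le_one O c)

theorem valuation_natCast_pow_sub_self_lt_one {p : ℕ} (hp : p.Prime)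
    (hvp : O.valuation p < 1) (n : ℕ) : O.valuation ((n : F) ^ p - n) < 1 := by
  obtain ⟨k, hk⟩ := (Int.ModEq.pow_prime_eq_self hp n).symm.dvd
  have hk' : (n : F) ^ p - n = p * k := by
    simpa using congrArg (Int.cast : ℤ → F) hk
  rw [hk', map_mul]
  exact mul_lt_one_of_lt_of_le hvp ((valuation_le_one_iff O _).mpr (intCast_mem O k))

theorem valuation_pow_sub_self_lt_one {p : ℕ} (hp : p.Prime) (hvp : O.valuation p < 1)
    {x : F} (hx : x ∈ O) {n : ℕ} (hn : O.valuation (x - n) < 1) :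
    O.valuation (x ^ p - x) < 1 := by
  have hnO : (n : F) ∈ O := natCast_mem O n
  rw [show x ^ p - x = (x ^ p - n ^ p) - (x - n) + ((n : F) ^ p - n) by ring]
  exact Valuation.map_add_lt _
    (Valuation.map_sub_lt _ ((valuation_pow_sub_pow_le hx hnO p).trans_lt hn) hn)
    (valuation_natCast_pow_sub_self_lt_one hp hvp n)

theorem valuation_pow_sub_self_of_one_lt {x : F} (hx : 1 < O.valuation x) {n : ℕ} (hn : 1 < n) :
    O.valuation (x ^ n - x) = O.valuation x ^ n := by
  rw [Valuation.map_sub_eq_of_lt_left _ (by rw [map_pow]; exact lt_self_pow₀ hx hn), map_pow]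

theorem inv_div_inv_sq_sub_one (y : F) : y⁻¹ / (y⁻¹ ^ 2 - 1) = -(y / (y ^ 2 - 1)) := by
  rcases eq_or_ne y 0 with rfl | hy
  · simp
  rw [show y⁻¹ ^ 2 - 1 = -(y ^ 2 - 1) / y ^ 2 by field_simp; ring, div_div_eq_mul_div,
    div_neg, show y⁻¹ * y ^ 2 = y by field_simp]

theorem sq_sub_one_ne_zero_and_mem_of_valuation_lt_one {c : F}
    (hdiv : ∀ y : F, O.valuation y < 1 → y / c ∈ O) {y : F} (hy : O.valuation y < 1) :
    y ^ 2 - 1 ≠ 0 ∧ 1 / c * y / (y ^ 2 - 1) ∈ O := by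
  have hden : O.valuation (y ^ 2 - 1) = 1 := by
    rw [Valuation.map_sub_eq_of_lt_right _
      (by rw [map_one, map_pow]; exact pow_lt_one₀ zero_le hy two_ne_zero), map_one]
  refine ⟨(Valuation.ne_zero_iff _).mp (hden ▸ one_ne_zero), ?_⟩
  rw [← valuation_le_one_iff, one_div_mul_eq_div, map_div₀, hden, div_one, valuation_le_one_iff]
  exact hdiv y hy

theorem sq_sub_one_ne_zero_and_mem_of_valuation_ne_one {c : F}
    (hdiv : ∀ y : F, O.valuation y < 1 → y / c ∈ O) {y : F} (hy : O.valuation y ≠ 1) :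
    y ^ 2 - 1 ≠ 0 ∧ 1 / c * y / (y ^ 2 - 1) ∈ O := by
  rcases hy.lt_or_gt with hy | hy
  · exact sq_sub_one_ne_zero_and_mem_of_valuation_lt_one hdiv hy
  have hinv : O.valuation y⁻¹ < 1 := by rw [map_inv₀]; exact inv_lt_one_of_one_lt₀ hy
  obtain ⟨hne, hmem⟩ := sq_sub_one_ne_zero_and_mem_of_valuation_lt_one hdiv hinv
  refine ⟨fun h => hne (by rw [inv_pow, sub_eq_zero.mp h, inv_one, sub_self]), ?_⟩
  rw [mul_div_assoc, inv_div_inv_sq_sub_one, mul_neg] at hmem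
  simpa only [mul_div_assoc, neg_mem_iff] using hmem

end ValuationSubring

open ValuationSubring in
theorem stmt_19_general (p : ℕ) (hp : p.Prime) {F : Type*} [Field F]
    (O : ValuationSubring F) (hO : IsPValuationRing p O) :
    ∀ x : F, ((x ^ p - x) ^ 2 - 1 ≠ 0) ∧
      (1 / (p : F)) * (x ^ p - x) / ((x ^ p - x) ^ 2 - 1) ∈ O := by
  simp only [IsPValuationRing, memMaxIdeal_iff_valuation_lt_one] at hO
  obtain ⟨hvp, hdiv, hres⟩ := hO
  intro x
  refine sq_sub_one_ne_zero_and_mem_of_valuation_ne_one hdiv ?_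
  rcases le_or_gt (O.valuation x) 1 with hx | hx
  · have hxO : x ∈ O := (valuation_le_one_iff O x).mp hx
    obtain ⟨n, hn⟩ := hres x hxO
    exact (valuation_pow_sub_self_lt_one hp hvp hxO hn).ne
  · rw [valuation_pow_sub_self_of_one_lt hx hp.one_lt]
    exact (one_lt_pow₀ hx hp.ne_zero).ne'

theorem stmt_19 (p : ℕ) (hp : p.Prime) {F : Type*} [Field F] [CharZero F]
    (O : ValuationSubring F) (hO : IsPValuationRing p O) :
    ∀ x : F, ((x ^ p - x) ^ 2 - 1 ≠ 0) ∧
      (1 / (p : F)) * (x ^ p - x) / ((x ^ p - x) ^ 2 - 1) ∈ O :=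
  stmt_19_general p hp O hO
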